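/- For all integers a, b, c, L with a, c, L ≥ 0 and b any integer, ∑_{k=0}^{L} q^{(a−b−k)(L−k)} [L choose k]_q [a choose k+b]_q [k+c choose a+L]_q = [c choose b+L]_q [c−b choose a−b]_q. -/
import Mathlib


open Finset

/-- The variable `q`, realized as the generator of the field of rational functions over `ℚ`. -/
noncomputable def qq : RatFunc ℚ := RatFunc.X

/-- `(x)_n = ∏_{j=1}^n (1 - x^j)`. -/
noncomputable def qPoch (x : RatFunc ℚ) (n : ℕ) : RatFunc ℚ :=
  ∏ j ∈ Finset.range n, (1 - x ^ (j + 1))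

/-- Gaussian binomial coefficient `[n choose k]_x`, zero unless `0 ≤ k ≤ n`. -/
noncomputable def qBin (x : RatFunc ℚ) (n k : ℤ) : RatFunc ℚ :=
  if 0 ≤ k ∧ k ≤ n then qPoch x n.toNat / (qPoch x k.toNat * qPoch x (n - k).toNat) else 0

/-- The `q`-trinomial coefficient `[L, b; a]_2` in base `x`. -/
noncomputable def qTri (x : RatFunc ℚ) (L : ℕ) (b a : ℤ) : RatFunc ℚ :=
  ∑ k ∈ Finset.range (L + 1),
    x ^ ((k : ℤ) * (k + b)) * qBin x (L : ℤ) (k : ℤ) * qBin x ((L : ℤ) - k) ((k : ℤ) + a)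

/-- The `q`-trinomial `T_n(L, a)`, written in terms of `s = q^{1/2}` (so the base is `s^2`):
`T_n(L,a) = ∑ s^{r(r-n)} (s²)_L / ((s²)_{(L-a-r)/2} (s²)_{(L+a-r)/2} (s²)_r)`,
the sum over `r ≥ 0` with `L - a - r` even and `r ≤ L - |a|`; zero for `|a| > L`. -/
noncomputable def qT (s : RatFunc ℚ) (n : ℤ) (L : ℕ) (a : ℤ) : RatFunc ℚ :=
  ∑ r ∈ Finset.range (L + 1),
    if Even ((L : ℤ) - a - r) ∧ (r : ℤ) ≤ (L : ℤ) - |a| then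
      s ^ ((r : ℤ) * ((r : ℤ) - n)) * qPoch (s ^ 2) L /
        (qPoch (s ^ 2) (((L : ℤ) - a - r) / 2).toNat *
          qPoch (s ^ 2) (((L : ℤ) + a - r) / 2).toNat * qPoch (s ^ 2) r)
    else 0

/-- The Cartan matrix of the Lie algebra `A_n`. -/
def cartanA (n : ℕ) (i j : Fin n) : ℤ :=
  if i = j then 2 else if |(i : ℤ) - (j : ℤ)| = 1 then -1 else 0

lemma one_sub_qq_pow_ne (j : ℕ) : (1 - qq ^ (j+1)) ≠ 0 := by
  have h : (1 - Polynomial.X ^ (j+1) : Polynomial ℚ) ≠ 0 := by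
    intro h
    have := congrArg (Polynomial.eval 0) h
    simp at this
  have : (1 - qq ^ (j+1)) = algebraMap (Polynomial ℚ) (RatFunc ℚ) (1 - Polynomial.X ^ (j+1)) := by
    rw [map_sub, map_one, map_pow, qq, RatFunc.algebraMap_X]
  rw [this]
  simpa using (RatFunc.algebraMap_ne_zero h)

lemma qPoch_ne (n : ℕ) : qPoch qq n ≠ 0 := by
  unfold qPoch
  exact Finset.prod_ne_zero_iff.2 fun j _ => one_sub_qq_pow_ne j

lemma qPoch_succ (n : ℕ) : qPoch qq (n+1) = qPoch qq n * (1 - qq ^ (n+1)) := by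
  unfold qPoch
  rw [Finset.prod_range_succ]

lemma qBin_natCast (n m : ℕ) :
    qBin qq n m = if m ≤ n then qPoch qq n / (qPoch qq m * qPoch qq (n-m)) else 0 := by
  unfold qBin
  by_cases h : m ≤ n
  · rw [if_pos ⟨Int.natCast_nonneg m, by exact_mod_cast h⟩, if_pos h]
    rw [Int.toNat_natCast, Int.toNat_natCast, show ((n:ℤ)-(m:ℤ)) = ((n-m:ℕ):ℤ) by omega,
      Int.toNat_natCast]
  · rw [if_neg, if_neg h]
    rintro ⟨-, h2⟩
    exact h (by exact_mod_cast h2)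

lemma qBin_neg {n m : ℤ} (h : m < 0) : qBin qq n m = 0 := by
  rw [qBin, if_neg]; rintro ⟨h1, -⟩; omega

lemma qBin_gt {n m : ℤ} (h : n < m) : qBin qq n m = 0 := by
  rw [qBin, if_neg]; rintro ⟨-, h2⟩; omega

lemma pascal (n m : ℤ) (hn : 1 ≤ n) :
    qBin qq n m = qBin qq (n-1) m + qq ^ (n-m) * qBin qq (n-1) (m-1) := by
  by_cases hm : 0 ≤ m ∧ m ≤ n
  · obtain ⟨hm0, hmn⟩ := hm
    lift n to ℕ using by omega with N
    lift m to ℕ using hm0 with M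
    have hN : 1 ≤ N := by exact_mod_cast hn
    have hMN : M ≤ N := by exact_mod_cast hmn
    have e1 : ((N:ℤ)-1) = ((N-1 : ℕ) : ℤ) := by omega
    rcases Nat.eq_zero_or_pos M with hM0 | hM0
    · subst hM0
      rw [e1, qBin_natCast, qBin_natCast, if_pos (by omega), if_pos (by omega),
        qBin_neg (by norm_num : ((0:ℕ):ℤ)-1 < 0)]
      have h2 : qPoch qq (0:ℕ) = 1 := by simp [qPoch]
      rw [h2]
      simp only [Nat.sub_zero, one_mul, mul_zero, add_zero]
      rw [div_self (qPoch_ne N), div_self (qPoch_ne (N-1))]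
    · rcases eq_or_lt_of_le hMN with hMN' | hMN'
      · subst hMN'
        rw [e1, qBin_natCast, qBin_natCast, if_pos le_rfl, if_neg (by omega),
          show ((M:ℤ) - (M:ℤ)) = ((0:ℕ):ℤ) by ring, zpow_natCast, qBin_natCast,
          if_pos (by omega)]
        have h2 : qPoch qq (M - M) = 1 := by simp [qPoch]
        have h3 : qPoch qq (M - 1 - (M-1)) = 1 := by simp [qPoch]
        rw [h2, h3]
        simp only [mul_one, zero_add]
        rw [div_self (qPoch_ne M), div_self (qPoch_ne (M-1))]
        simp
      · -- 0 < M < N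
        obtain ⟨A, rfl⟩ : ∃ A, M = A + 1 := ⟨M - 1, by omega⟩
        obtain ⟨B, rfl⟩ : ∃ B, N = A + B + 2 := ⟨N - A - 2, by omega⟩
        rw [e1, qBin_natCast, qBin_natCast, if_pos (by omega), if_pos (by omega),
          show ((A+1:ℕ):ℤ)-1 = ((A:ℕ):ℤ) by push_cast; ring, qBin_natCast, if_pos (by omega),
          show ((A+B+2:ℕ):ℤ) - ((A+1:ℕ):ℤ) = ((B+1:ℕ):ℤ) by push_cast; ring, zpow_natCast]
        rw [show A + B + 2 - (A+1) = B + 1 by omega,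
          show A + B + 2 - 1 = A + B + 1 by omega,
          show A + B + 1 - (A + 1) = B by omega,
          show A + B + 1 - A = B + 1 by omega]
        rw [show A + B + 2 = (A+B+1)+1 by ring, qPoch_succ,
          show A + 1 = A+1 by rfl, qPoch_succ (A), qPoch_succ (B)]
        have hA := qPoch_ne A
        have hB := qPoch_ne B
        have hAB := qPoch_ne (A+B+1)
        have h1 := one_sub_qq_pow_ne A
        have h2 := one_sub_qq_pow_ne B
        have h3 := one_sub_qq_pow_ne (A+B+1)
        field_simp
        ring
  · rw [qBin, if_neg hm]
    rcases not_and_or.1 hm with h | h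
    · rw [qBin_neg (by omega : m < 0), qBin_neg (by omega : m - 1 < 0)]
      ring
    · rw [qBin_gt (by omega : n - 1 < m), qBin_gt (by omega : n - 1 < m - 1)]
      ring

lemma qBin_zero_left (m : ℤ) : qBin qq 0 m = if m = 0 then 1 else 0 := by
  unfold qBin
  by_cases h : m = 0
  · subst h
    rw [if_pos ⟨le_rfl, le_rfl⟩, if_pos rfl]
    simp [qPoch]
  · rw [if_neg, if_neg h]
    rintro ⟨h1, h2⟩
    exact h (le_antisymm h2 h1)

lemma subset_id (h c L : ℕ) (hh : h ≤ L) :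
    qBin qq (L:ℤ) (h:ℤ) * qBin qq ((h+c:ℕ):ℤ) (L:ℤ) =
      qBin qq (c:ℤ) ((L-h:ℕ):ℤ) * qBin qq ((c+h:ℕ):ℤ) (h:ℤ) := by
  by_cases hc : L ≤ h + c
  · rw [qBin_natCast, qBin_natCast, qBin_natCast, qBin_natCast,
      if_pos hh, if_pos hc, if_pos (by omega : L - h ≤ c), if_pos (by omega : h ≤ c + h)]
    rw [show c - (L - h) = h + c - L by omega, show c + h - h = c by omega]
    have e1 := qPoch_ne L
    have e2 := qPoch_ne h
    have e3 := qPoch_ne (L - h)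
    have e4 := qPoch_ne (h + c - L)
    have e5 := qPoch_ne c
    have e6 : qPoch qq (c + h) = qPoch qq (h + c) := by rw [Nat.add_comm]
    rw [e6]
    have e7 := qPoch_ne (h + c)
    field_simp
  · rw [qBin_gt (by omega : ((h+c:ℕ):ℤ) < (L:ℤ)), qBin_gt (by omega : (c:ℤ) < ((L-h:ℕ):ℤ))]
    ring

lemma qq_ne : (qq : RatFunc ℚ) ≠ 0 := by
  rw [qq]; exact RatFunc.X_ne_zero

noncomputable def F (A c : ℤ) (L : ℕ) (b : ℤ) : RatFunc ℚ :=
  ∑ k ∈ Finset.range (L + 1),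
    qq ^ ((A - b - k) * ((L : ℤ) - k)) * qBin qq (L : ℤ) (k : ℤ) *
      qBin qq A ((k : ℤ) + b) * qBin qq ((k : ℤ) + c) (A + L)

lemma base0 (c L : ℕ) (b : ℤ) :
    F 0 (c:ℤ) L b = qBin qq (c:ℤ) (b + L) * qBin qq ((c:ℤ) - b) (0 - b) := by
  unfold F
  have hterm : ∀ k ∈ Finset.range (L+1),
      qq ^ ((0 - b - (k:ℤ)) * ((L : ℤ) - k)) * qBin qq (L : ℤ) (k : ℤ) *
        qBin qq 0 ((k : ℤ) + b) * qBin qq ((k : ℤ) + c) (0 + (L:ℤ))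
      = if (k:ℤ) = -b then qBin qq (L:ℤ) (k:ℤ) * qBin qq ((k:ℤ)+c) ((L:ℤ)) else 0 := by
    intro k hk
    rw [qBin_zero_left]
    by_cases h : (k:ℤ) + b = 0
    · rw [if_pos h, if_pos (by omega)]
      rw [show (0 - b - (k:ℤ)) = 0 by omega, zero_mul, zpow_zero, zero_add]
      ring
    · rw [if_neg h, if_neg (by omega)]
      ring
  rw [Finset.sum_congr rfl hterm]
  by_cases hb : 0 ≤ -b ∧ -b ≤ (L:ℤ)
  · have hmem : (-b).toNat ∈ Finset.range (L+1) := by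
      rw [Finset.mem_range]; omega
    rw [Finset.sum_eq_single_of_mem _ hmem (fun k _ hne => by
      rw [if_neg (fun heq => hne (by omega))])]
    rw [if_pos (by omega)]
    set h := (-b).toNat with hhdef
    have hhL : h ≤ L := by omega
    have key := subset_id h c L hhL
    rw [show ((h:ℤ)+(c:ℤ)) = ((h+c:ℕ):ℤ) by push_cast; ring,
      show (b + (L:ℤ)) = ((L-h:ℕ):ℤ) by omega,
      show ((c:ℤ) - b) = ((c+h:ℕ):ℤ) by omega,
      show ((0:ℤ) - b) = (h:ℤ) by omega]
    exact key
  · rw [Finset.sum_eq_zero (fun k hk => by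
      rw [Finset.mem_range] at hk
      rw [if_neg (by omega)])]
    by_cases hb2 : 0 ≤ -b
    · rw [qBin_neg (show b + (L:ℤ) < 0 by omega)]; ring
    · rw [qBin_neg (show (0:ℤ) - b < 0 by omega)]; ring

lemma zeroc (A : ℤ) (hA : 1 ≤ A) (L : ℕ) (b : ℤ) :
    F A 0 L b = qBin qq 0 (b + L) * qBin qq (0 - b) (A - b) := by
  unfold F
  rw [Finset.sum_eq_zero (fun k hk => by
    rw [Finset.mem_range] at hk
    rw [qBin_gt (show (k:ℤ) + 0 < A + (L:ℤ) by omega)]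
    ring)]
  rw [qBin_zero_left]
  by_cases h : b + (L:ℤ) = 0
  · rw [if_pos h, qBin_gt (show 0 - b < A - b by omega)]
    ring
  · rw [if_neg h]
    ring

lemma rhs_rec (A c b L : ℤ) (hc : 1 ≤ c) (hL : 0 ≤ L) :
    qBin qq c (b+L) * qBin qq (c-b) (A-b) =
      qBin qq (c-1) (b+L) * qBin qq (c-1-b) (A-b)
      + qq^(c-A) * (qBin qq (c-1) (b+L) * qBin qq (c-1-b) (A-1-b))
      + qq^(c-b-L) * (qBin qq (c-1) (b+L-1) * qBin qq (c-b) (A-b)) := by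
  have h1 := pascal c (b+L) hc
  rw [show c - (b+L) = c - b - L by ring] at h1
  by_cases hcb : 1 ≤ c - b
  · have h2 := pascal (c-b) (A-b) hcb
    rw [show c - b - 1 = c - 1 - b by ring, show A - b - 1 = A - 1 - b by ring,
      show c - b - (A - b) = c - A by ring] at h2
    linear_combination qBin qq (c-b) (A-b) * h1 + qBin qq (c-1) (b+L) * h2
  · have h0 : qBin qq (c-1) (b+L) = 0 := qBin_gt (by omega)
    linear_combination qBin qq (c-b) (A-b) * h1 +
      (qBin qq (c-b) (A-b) - qBin qq (c-1-b) (A-b)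
        - qq^(c-A) * qBin qq (c-1-b) (A-1-b)) * h0

lemma term_split (A c : ℤ) (hA : 0 ≤ A) (hc : 0 ≤ c) (L k : ℕ) (b : ℤ) :
    qq ^ ((A + 1 - b - k) * ((L:ℤ)-k)) * qBin qq (L:ℤ) (k:ℤ) * qBin qq (A+1) ((k:ℤ)+b)
        * qBin qq ((k:ℤ)+(c+1)) (A+1+L)
    = qq ^ ((A+1-b-k)*((L:ℤ)-k)) * qBin qq (L:ℤ) (k:ℤ) * qBin qq (A+1) ((k:ℤ)+b)
        * qBin qq ((k:ℤ)+c) (A+1+L)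
      + qq^(c-A) * (qq ^ ((A-b-k)*((L:ℤ)-k)) * qBin qq (L:ℤ) (k:ℤ) * qBin qq A ((k:ℤ)+b)
          * qBin qq ((k:ℤ)+c) (A+L))
      + qq^(c+1-b-L) * (qq ^ ((A-(b-1)-k)*((L:ℤ)-k)) * qBin qq (L:ℤ) (k:ℤ)
          * qBin qq A ((k:ℤ)+(b-1)) * qBin qq ((k:ℤ)+c) (A+L)) := by
  have h1 := pascal ((k:ℤ)+(c+1)) (A+1+L) (by omega)
  rw [show (k:ℤ)+(c+1)-1 = (k:ℤ)+c by ring] at h1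
  have h2 := pascal (A+1) ((k:ℤ)+b) (by omega)
  rw [show A+1-1 = A by ring, show (k:ℤ)+b-1 = (k:ℤ)+(b-1) by ring] at h2
  rw [show A+1+(L:ℤ)-1 = A+(L:ℤ) by ring] at h1
  have h3 : qq ^ ((A+1-b-k)*((L:ℤ)-k)) * qq ^ ((k:ℤ)+(c+1)-(A+1+L)) =
      qq^(c-A) * qq ^ ((A-b-k)*((L:ℤ)-k)) := by
    rw [← zpow_add₀ qq_ne, ← zpow_add₀ qq_ne]
    congr 1
    ring
  have h4 : qq ^ ((A+1-b-k)*((L:ℤ)-k)) * qq ^ ((k:ℤ)+(c+1)-(A+1+L)) * qq ^ (A+1-((k:ℤ)+b)) =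
      qq^(c+1-b-L) * qq ^ ((A-(b-1)-k)*((L:ℤ)-k)) := by
    rw [← zpow_add₀ qq_ne, ← zpow_add₀ qq_ne, ← zpow_add₀ qq_ne]
    congr 1
    ring
  linear_combination
    (qq ^ ((A+1-b-k)*((L:ℤ)-k)) * qBin qq (L:ℤ) (k:ℤ) * qBin qq (A+1) ((k:ℤ)+b)) * h1
    + (qq ^ ((A+1-b-k)*((L:ℤ)-k)) * qq ^ ((k:ℤ)+(c+1)-(A+1+L)) * qBin qq (L:ℤ) (k:ℤ)
        * qBin qq ((k:ℤ)+c) (A+L)) * h2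
    + (qBin qq (L:ℤ) (k:ℤ) * qBin qq A ((k:ℤ)+b) * qBin qq ((k:ℤ)+c) (A+L)) * h3
    + (qBin qq (L:ℤ) (k:ℤ) * qBin qq A ((k:ℤ)+(b-1)) * qBin qq ((k:ℤ)+c) (A+L)) * h4

lemma key (c : ℕ) : ∀ (A b : ℤ), 0 ≤ A → ∀ L : ℕ,
    (∑ k ∈ Finset.range (L + 1),
      qq ^ ((A - b - k) * ((L : ℤ) - k)) * qBin qq (L : ℤ) (k : ℤ) *
        qBin qq A ((k : ℤ) + b) * qBin qq ((k : ℤ) + (c:ℤ)) (A + L))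
    = qBin qq (c:ℤ) (b + L) * qBin qq ((c:ℤ) - b) (A - b) := by
  induction c with
  | zero =>
    intro A b hA L
    rcases eq_or_lt_of_le hA with h | h
    · subst h
      have := base0 0 L b
      unfold F at this
      simpa using this
    · have := zeroc A (by omega) L b
      unfold F at this
      simpa using this
  | succ c ih =>
    intro A b hA L
    rcases eq_or_lt_of_le hA with h | h
    · subst h
      have := base0 (c+1) L b
      unfold F at this
      exact this
    · obtain ⟨A', rfl⟩ : ∃ A', A = A' + 1 := ⟨A - 1, by ring⟩
      have hA' : 0 ≤ A' := by omega
      rw [show ((c+1:ℕ):ℤ) = (c:ℤ)+1 by push_cast; ring]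
      rw [Finset.sum_congr rfl
        (fun k _ => term_split A' (c:ℤ) hA' (Int.natCast_nonneg c) L k b)]
      rw [Finset.sum_add_distrib, Finset.sum_add_distrib, ← Finset.mul_sum, ← Finset.mul_sum]
      rw [ih (A'+1) b (by omega) L, ih A' b hA' L, ih A' (b-1) hA' L]
      have h := rhs_rec (A'+1) ((c:ℤ)+1) b (L:ℤ) (by omega) (Int.natCast_nonneg L)
      rw [show (c:ℤ)+1-1 = (c:ℤ) by ring, show A'+1-1 = A' by ring,
        show (c:ℤ)+1-(A'+1) = (c:ℤ)-A' by ring] at h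
      rw [show (c:ℤ)-(b-1) = (c:ℤ)+1-b by ring, show A'-(b-1) = A'+1-b by ring,
        show (b-1)+(L:ℤ) = b+(L:ℤ)-1 by ring]
      linear_combination -h

theorem stmt17 (a c L : ℕ) (b : ℤ) :
    ∑ k ∈ Finset.range (L + 1),
        qq ^ (((a : ℤ) - b - k) * ((L : ℤ) - k)) * qBin qq (L : ℤ) (k : ℤ) *
          qBin qq (a : ℤ) ((k : ℤ) + b) * qBin qq ((k : ℤ) + c) ((a : ℤ) + L) =
      qBin qq (c : ℤ) (b + L) * qBin qq ((c : ℤ) - b) ((a : ℤ) - b) := by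
  exact key c (a:ℤ) b (Int.natCast_nonneg a) L
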